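/- Let K be geometric with P(K = k) = q p^{k−1} (k ≥ 1), and let σ be independent of K with distribution G that is regularly varying: Ḡ(x) = L(x)/x^{α+1} with α > 0 and L slowly varying. With r = p + λb < 1 and m^{(0)}_k = λb(1 − r^k)/(1 − r), one has, as x → ∞, P((1 + m^{(0)}_{K−1}) σ > x) ~ (q L(x)/x^{α+1}) Σ_{k=0}^∞ p^k ((1 − (p + r^k λ b))/(1 − r))^{α+1}. -/

import Mathlib

open MeasureTheory ProbabilityTheory Filter Set
open scoped Topology

/-!
Conditioning on `K = k + 1`, which has probability `q p^k`, independence gives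
`P((1 + m_{K-1}) σ > x) = ∑ q p^k Ḡ(x / c_k)` with `c_k = 1 + m_k ∈ [1, 1 + λb/(1 - r)]`.
Regular variation gives `Ḡ(x / c) ~ c^{α+1} L(x) / x^{α+1}` for each `c > 0`. Since `Ḡ` is
nonincreasing, the `k`-th normalised term is dominated by `p^k Ḡ(x / C) x^{α+1} / L(x)` with
`C = sup c_k`, which is eventually bounded, so the limit passes through the series.
-/

theorem tendsto_apply_div_mul_rpow_div {G L : ℝ → ℝ} {β c : ℝ} (hc : 0 < c)
    (hL : Tendsto (fun x => L (c⁻¹ * x) / L x) atTop (𝓝 1))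
    (hL0 : ∀ᶠ x in atTop, L x ≠ 0) (hG : ∀ x, 0 < x → G x = L x / x ^ β) :
    Tendsto (fun x => G (x / c) * (x ^ β / L x)) atTop (𝓝 (c ^ β)) := by
  rw [← one_mul (c ^ β)]
  refine (hL.mul_const _).congr' ?_
  filter_upwards [hL0, eventually_gt_atTop 0] with x hLx hx
  have hxβ : x ^ β ≠ 0 := (Real.rpow_pos_of_pos hx _).ne'
  have hcβ : c ^ β ≠ 0 := (Real.rpow_pos_of_pos hc _).ne'
  rw [hG _ (div_pos hx hc), Real.div_rpow hx.le hc.le, inv_mul_eq_div]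
  field_simp

theorem le_of_tendsto_of_antitone {G φ : ℝ → ℝ} {c C a A : ℝ} (hG : Antitone G)
    (hφ : ∀ᶠ x in atTop, 0 ≤ φ x) (hc : 0 < c) (hcC : c ≤ C)
    (ha : Tendsto (fun x => G (x / c) * φ x) atTop (𝓝 a))
    (hA : Tendsto (fun x => G (x / C) * φ x) atTop (𝓝 A)) : a ≤ A := by
  refine le_of_tendsto_of_tendsto ha hA ?_
  filter_upwards [hφ, eventually_ge_atTop 0] with x hφx hx
  exact mul_le_mul_of_nonneg_right (hG (div_le_div_of_nonneg_left hx hc hcC)) hφx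

theorem tendsto_tsum_mul_of_antitone {G φ : ℝ → ℝ} {w c a : ℕ → ℝ} {C A : ℝ}
    (hG : Antitone G) (hG0 : ∀ x, 0 ≤ G x) (hφ : ∀ᶠ x in atTop, 0 ≤ φ x)
    (hw : Summable w) (hw0 : ∀ k, 0 ≤ w k) (hc : ∀ k, 0 < c k) (hcC : ∀ k, c k ≤ C)
    (ha : ∀ k, Tendsto (fun x => G (x / c k) * φ x) atTop (𝓝 (a k)))
    (hA : Tendsto (fun x => G (x / C) * φ x) atTop (𝓝 A)) :
    Tendsto (fun x => ∑' k, w k * (G (x / c k) * φ x)) atTop (𝓝 (∑' k, w k * a k)) := by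
  refine tendsto_tsum_of_dominated_convergence (bound := fun k => w k * (A + 1))
    (hw.mul_right _) (fun k => (ha k).const_mul (w k)) ?_
  filter_upwards [hA.eventually_lt_const (lt_add_one A), hφ, eventually_ge_atTop 0]
    with x hxA hφx hx k
  have hdom : G (x / c k) * φ x ≤ G (x / C) * φ x :=
    mul_le_mul_of_nonneg_right (hG (div_le_div_of_nonneg_left hx (hc k) (hcC k))) hφx
  rw [Real.norm_of_nonneg (mul_nonneg (hw0 k) (mul_nonneg (hG0 _) hφx))]
  exact mul_le_mul_of_nonneg_left (hdom.trans hxA.le) (hw0 k)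

theorem tendsto_tsum_mul_div_tsum_mul_rpow {G L : ℝ → ℝ} {β C : ℝ} {w c : ℕ → ℝ}
    (hG : Antitone G) (hGpos : ∀ x, 0 < G x) (hGL : ∀ x, 0 < x → G x = L x / x ^ β)
    (hL : ∀ c : ℝ, 0 < c → Tendsto (fun x => L (c * x) / L x) atTop (𝓝 1))
    (hw : Summable w) (hw0 : ∀ k, 0 ≤ w k) (hc : ∀ k, 0 < c k) (hcC : ∀ k, c k ≤ C)
    (i : ℕ) (hwi : 0 < w i) :
    Tendsto (fun x => (∑' k, w k * G (x / c k)) / (L x / x ^ β * ∑' k, w k * c k ^ β))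
      atTop (𝓝 1) := by
  have hLpos : ∀ᶠ x in atTop, 0 < L x := by
    filter_upwards [eventually_gt_atTop 0] with x hx
    have := hGpos x
    rwa [hGL x hx, div_pos_iff_of_pos_right (Real.rpow_pos_of_pos hx _)] at this
  have hφ : ∀ᶠ x in atTop, 0 ≤ x ^ β / L x := by
    filter_upwards [hLpos, eventually_gt_atTop 0] with x hLx hx
    positivity
  have hlim {c : ℝ} (hc : 0 < c) :
      Tendsto (fun x => G (x / c) * (x ^ β / L x)) atTop (𝓝 (c ^ β)) :=
    tendsto_apply_div_mul_rpow_div hc (hL _ (inv_pos.2 hc)) (hLpos.mono fun _ h => h.ne') hGL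
  have hC : 0 < C := (hc i).trans_le (hcC i)
  have hterm0 (k : ℕ) : 0 ≤ w k * c k ^ β := mul_nonneg (hw0 k) (Real.rpow_nonneg (hc k).le _)
  have hsum : Summable fun k => w k * c k ^ β := by
    refine Summable.of_nonneg_of_le hterm0 (fun k => ?_) (hw.mul_right (C ^ β))
    exact mul_le_mul_of_nonneg_left
      (le_of_tendsto_of_antitone hG hφ (hc k) (hcC k) (hlim (hc k)) (hlim hC)) (hw0 k)
  have hS : 0 < ∑' k, w k * c k ^ β :=
    hsum.tsum_pos hterm0 i (mul_pos hwi (Real.rpow_pos_of_pos (hc i) _))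
  have hmix := (tendsto_tsum_mul_of_antitone hG (fun x => (hGpos x).le) hφ hw hw0 hc hcC
    (fun k => hlim (hc k)) (hlim hC)).div_const (∑' k, w k * c k ^ β)
  rw [div_self hS.ne'] at hmix
  refine hmix.congr' ?_
  filter_upwards [hLpos, eventually_gt_atTop 0] with x hLx hx
  simp_rw [← mul_assoc, tsum_mul_right]
  field_simp

section Mixture

variable {Ω : Type*} [MeasurableSpace Ω] {μ : Measure Ω} {K : Ω → ℕ} {σ : Ω → ℝ}

theorem measure_lt_mul_eq_tsum (hK : Measurable K) (hσ : Measurable σ) (hKσ : IndepFun K σ μ)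
    {f : ℕ → ℝ} (hf : ∀ n, 0 < f n) (x : ℝ) :
    μ {ω | x < f (K ω) * σ ω} = ∑' n, μ {ω | K ω = n} * μ {ω | x / f n < σ ω} := by
  have hfiber (n : ℕ) : {ω | K ω = n} = K ⁻¹' {n} := rfl
  have hlevel (n : ℕ) : {ω | x / f n < σ ω} = σ ⁻¹' Ioi (x / f n) := rfl
  have hsplit : {ω | x < f (K ω) * σ ω} = ⋃ n, K ⁻¹' {n} ∩ σ ⁻¹' Ioi (x / f n) := by
    ext ω
    simp [div_lt_iff₀ (hf _), mul_comm]
  rw [hsplit, measure_iUnion]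
  · simp_rw [hfiber, hlevel]
    exact tsum_congr fun n => hKσ.measure_inter_preimage_eq_mul _ _
      (measurableSet_singleton n) measurableSet_Ioi
  · exact fun i j hij => ((pairwise_disjoint_fiber K) hij).mono inter_subset_left inter_subset_left
  · exact fun n => (hK (measurableSet_singleton n)).inter (hσ measurableSet_Ioi)

theorem measure_eq_zero_of_tsum_succ_eq_one [IsProbabilityMeasure μ] (hK : Measurable K)
    (h : ∑' k, μ {ω | K ω = k + 1} = 1) : μ {ω | K ω = 0} = 0 := by
  have htotal : ∑' n, μ {ω | K ω = n} = 1 := by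
    change ∑' n, μ (K ⁻¹' {n}) = 1
    rw [← measure_iUnion (pairwise_disjoint_fiber K) fun n => hK (measurableSet_singleton n),
      ← preimage_iUnion, iUnion_of_singleton, preimage_univ, measure_univ]
  rw [tsum_eq_zero_add' ENNReal.summable, h] at htotal
  simpa using htotal

theorem toReal_measure_lt_mul_pred_eq_tsum_geometric [IsProbabilityMeasure μ]
    (hK : Measurable K) (hσ : Measurable σ) (hKσ : IndepFun K σ μ) {p q : ℝ} (hp : 0 ≤ p)
    (hp1 : p < 1) (hq : q = 1 - p)
    (hK_law : ∀ k : ℕ, 1 ≤ k → μ {ω | K ω = k} = ENNReal.ofReal (q * p ^ (k - 1)))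
    {f : ℕ → ℝ} (hf : ∀ n, 0 < f n) (x : ℝ) :
    (μ {ω | x < f (K ω - 1) * σ ω}).toReal
      = ∑' k, q * p ^ k * (μ {ω | x / f k < σ ω}).toReal := by
  have hlaw (k : ℕ) : μ {ω | K ω = k + 1} = ENNReal.ofReal (q * p ^ k) := by
    simpa using hK_law (k + 1) le_add_self
  have hq0 : 0 ≤ q := by linarith
  have hK0 : μ {ω | K ω = 0} = 0 := by
    refine measure_eq_zero_of_tsum_succ_eq_one hK ?_
    rw [tsum_congr hlaw, ← ENNReal.ofReal_tsum_of_nonneg (fun k => by positivity)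
      ((summable_geometric_of_lt_one hp hp1).mul_left q), tsum_mul_left,
      tsum_geometric_of_lt_one hp hp1, hq, mul_inv_cancel₀ (by linarith), ENNReal.ofReal_one]
  rw [measure_lt_mul_eq_tsum (f := fun n => f (n - 1)) hK hσ hKσ (fun n => hf _),
    tsum_eq_zero_add' ENNReal.summable, hK0, zero_mul, zero_add,
    ENNReal.tsum_toReal_eq fun k => ENNReal.mul_ne_top (measure_ne_top _ _) (measure_ne_top _ _)]
  refine tsum_congr fun k => ?_
  rw [ENNReal.toReal_mul, hlaw, ENNReal.toReal_ofReal (by positivity), Nat.add_sub_cancel]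

end Mixture

theorem one_add_mul_one_sub_pow_div_mem_Icc {a r : ℝ} (ha : 0 ≤ a) (hr0 : 0 ≤ r) (hr1 : r < 1)
    (k : ℕ) : 1 + a * (1 - r ^ k) / (1 - r) ∈ Icc 1 (1 + a / (1 - r)) := by
  have hrk : r ^ k ≤ 1 := pow_le_one₀ hr0 hr1.le
  have h1r : 0 < 1 - r := by linarith
  refine ⟨le_add_of_nonneg_right (div_nonneg (mul_nonneg ha (by linarith)) h1r.le), ?_⟩
  gcongr
  exact mul_le_of_le_one_right ha (sub_le_self _ (pow_nonneg hr0 k))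

theorem geometric_scaled_regular_variation_general
    {Ω : Type*} [MeasureSpace Ω] [IsProbabilityMeasure (ℙ : Measure Ω)]
    -- parameters
    (p q lam b r : ℝ)
    (hp : 0 < p) (hp1 : p < 1) (hq : q = 1 - p)
    (hlam : 0 < lam) (hb : 0 < b) (hr : r = p + lam * b) (hr1 : r < 1)
    -- the constants `m^{(0)}_k = λ b (1 - r^k)/(1 - r)`
    (m : ℕ → ℝ) (hm : ∀ k, m k = lam * b * (1 - r ^ k) / (1 - r))
    -- a geometric random variable `K` and an independent positive `σ`
    (K : Ω → ℕ) (σ : Ω → ℝ) (hK_meas : Measurable K) (hσ_meas : Measurable σ)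
    (hKσ_indep : IndepFun K σ ℙ)
    (hK_law : ∀ k : ℕ, 1 ≤ k → ℙ {ω | K ω = k} = ENNReal.ofReal (q * p ^ (k - 1)))
    -- the distribution `G` of `σ` is regularly varying with index `α + 1`
    (Gbar : ℝ → ℝ) (hGbar : ∀ x, Gbar x = (ℙ {ω | x < σ ω}).toReal)
    (hGpos : ∀ x, 0 < Gbar x)
    (α : ℝ) (L : ℝ → ℝ)
    (hL : ∀ c : ℝ, 0 < c → Tendsto (fun x => L (c * x) / L x) atTop (nhds 1))
    (hG_rv : ∀ x : ℝ, 0 < x → Gbar x = L x / x ^ (α + 1)) :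
    Tendsto (fun x : ℝ =>
      (ℙ {ω | x < (1 + m (K ω - 1)) * σ ω}).toReal /
        ((q * L x / x ^ (α + 1)) *
          ∑' k : ℕ, p ^ k * ((1 - (p + r ^ k * lam * b)) / (1 - r)) ^ (α + 1)))
      atTop (nhds 1) := by
  set c : ℕ → ℝ := fun k => (1 - (p + r ^ k * lam * b)) / (1 - r)
  have hmc (k : ℕ) : 1 + m k = c k := by
    have h1r : 1 - r ≠ 0 := by linarith
    simp only [c, hm]
    field_simp
    rw [hr]
    ring
  have hcC (k : ℕ) : c k ∈ Icc 1 (1 + lam * b / (1 - r)) := hmc k ▸ hm k ▸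
    one_add_mul_one_sub_pow_div_mem_Icc (by positivity) (by rw [hr]; positivity) hr1 k
  have hc0 (k : ℕ) : 0 < c k := one_pos.trans_le (hcC k).1
  have hGanti : Antitone Gbar := fun x y hxy => by
    simp only [hGbar]
    exact ENNReal.toReal_mono (measure_ne_top _ _) (measure_mono fun ω h => hxy.trans_lt h)
  have hq0 : q ≠ 0 := by rw [hq]; exact sub_ne_zero.2 hp1.ne'
  refine (tendsto_tsum_mul_div_tsum_mul_rpow hGanti hGpos hG_rv hL
    (summable_geometric_of_lt_one hp.le hp1) (fun k => by positivity) hc0 (fun k => (hcC k).2)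
    0 (by simp)).congr fun x => ?_
  simp_rw [hmc]
  change _ = (ℙ {ω | x < c (K ω - 1) * σ ω}).toReal / (_ * ∑' k, p ^ k * c k ^ (α + 1))
  rw [toReal_measure_lt_mul_pred_eq_tsum_geometric hK_meas hσ_meas hKσ_indep hp.le hp1 hq hK_law
    hc0 x]
  simp_rw [← hGbar, mul_assoc q, tsum_mul_left]
  rw [mul_div_assoc q (L x), mul_assoc q, mul_div_mul_left _ _ hq0]

/-- Corollary 2.2 (a): tail asymptotics of `(1 + m^{(0)}_{K-1}) σ`
for a geometric `K` independent of a regularly varying `σ`. -/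
theorem geometric_scaled_regular_variation
    {Ω : Type*} [MeasureSpace Ω] [IsProbabilityMeasure (ℙ : Measure Ω)]
    -- parameters
    (p q lam b r : ℝ)
    (hp : 0 < p) (hp1 : p < 1) (hq : q = 1 - p)
    (hlam : 0 < lam) (hb : 0 < b) (hr : r = p + lam * b) (hr1 : r < 1)
    -- the constants `m^{(0)}_k = λ b (1 - r^k)/(1 - r)`
    (m : ℕ → ℝ) (hm : ∀ k, m k = lam * b * (1 - r ^ k) / (1 - r))
    -- a geometric random variable `K` and an independent positive `σ`
    (K : Ω → ℕ) (σ : Ω → ℝ) (hK_meas : Measurable K) (hσ_meas : Measurable σ)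
    (hKσ_indep : IndepFun K σ ℙ)
    (hK_law : ∀ k : ℕ, 1 ≤ k → ℙ {ω | K ω = k} = ENNReal.ofReal (q * p ^ (k - 1)))
    (hσ_pos : ∀ᵐ ω ∂ℙ, 0 < σ ω)
    -- the distribution `G` of `σ` is regularly varying with index `α + 1`
    (Gbar : ℝ → ℝ) (hGbar : ∀ x, Gbar x = (ℙ {ω | x < σ ω}).toReal)
    (hGpos : ∀ x, 0 < Gbar x)
    (α : ℝ) (hα : 0 < α) (L : ℝ → ℝ)
    (hL : ∀ c : ℝ, 0 < c → Tendsto (fun x => L (c * x) / L x) atTop (nhds 1))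
    (hG_rv : ∀ x : ℝ, 0 < x → Gbar x = L x / x ^ (α + 1)) :
    Tendsto (fun x : ℝ =>
      (ℙ {ω | x < (1 + m (K ω - 1)) * σ ω}).toReal /
        ((q * L x / x ^ (α + 1)) *
          ∑' k : ℕ, p ^ k * ((1 - (p + r ^ k * lam * b)) / (1 - r)) ^ (α + 1)))
      atTop (nhds 1) :=
  geometric_scaled_regular_variation_general p q lam b r hp hp1 hq hlam hb hr hr1 m hm K σ hK_meas
    hσ_meas hKσ_indep hK_law Gbar hGbar hGpos α L hL hG_rv
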